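/- arXiv:math/0510228 — 4 statements merged into one kernel-verified Lean document; each statement's English description precedes it below -/
import Mathlib

section
/- Let n be a natural number, G = (Fin n → ZMod 2), R = AddMonoidAlgebra (ZMod 2) G, and I ⊆ R the augmentation ideal. For every k ≥ 1, the k-th power I^k of the augmentation ideal, viewed as a (ZMod 2)-submodule of R, equals the (ZMod 2)-linear span of the set of fundamental classes [H] := ∑_{h ∈ H} [h], where H ranges over the subgroups of G with exactly 2^k elements. -/
open AddMonoidAlgebra

/-- The augmentation homomorphism of the group algebra of `(ZMod 2)^n` over `ZMod 2`:
the algebra homomorphism sending each basis element `[g]` to `1`. -/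
noncomputable def aug (n : ℕ) :
    AddMonoidAlgebra (ZMod 2) (Fin n → ZMod 2) →ₐ[ZMod 2] ZMod 2 :=
  AddMonoidAlgebra.lift (ZMod 2) (ZMod 2) (Fin n → ZMod 2) 1

/-- The augmentation ideal, i.e. the kernel of the augmentation homomorphism. -/
noncomputable def augIdeal (n : ℕ) : Ideal (AddMonoidAlgebra (ZMod 2) (Fin n → ZMod 2)) :=
  RingHom.ker (aug n)

/-- The fundamental class `[H] = ∑_{h ∈ H} [h]` of a subgroup `H` of `(ZMod 2)^n`. -/
noncomputable def fundClass (n : ℕ) (H : AddSubgroup (Fin n → ZMod 2)) :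
    AddMonoidAlgebra (ZMod 2) (Fin n → ZMod 2) :=
  ∑ᶠ h : H, AddMonoidAlgebra.single (h : Fin n → ZMod 2) (1 : ZMod 2)

/-!
Over `𝔽₂` the augmentation ideal is spanned by the elements `1 + [g]`, and
`[H] * (1 + [g])` is `0` if `g ∈ H` and `[H + ⟨g⟩]` otherwise, the class of a subgroup of twice
the order. Conversely every subgroup of order `2 ^ (k + 1)` is `H₀ + ⟨g⟩` with `|H₀| = 2 ^ k` and
`g ∉ H₀`: take for `H₀` the kernel in `H` of a linear form that is `1` on some `g ≠ 0` of `H`.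
So the span of the rank-`k` classes times `I` is the span of the rank-`(k + 1)` classes, and
induction from `[{0}] = 1` computes the submodule powers `I ^ k`; these agree with the ideal powers
for `k ≥ 1` only, the ideal `I ^ 0` being the whole ring rather than `span {1}`.
-/

lemma ZMod.eq_zero_or_eq_one (a : ZMod 2) : a = 0 ∨ a = 1 := by
  decide +revert

namespace ZModModule

variable {V : Type*} [AddCommGroup V] [Module (ZMod 2) V] {H : AddSubgroup V} {g x : V}

open AddSubgroup

lemma mem_sup_zmultiples_iff : x ∈ H ⊔ zmultiples g ↔ x ∈ H ∨ x + g ∈ H := by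
  constructor
  · rw [mem_sup]
    rintro ⟨y, hy, _, ⟨m, rfl⟩, rfl⟩
    simp only [← Int.cast_smul_eq_zsmul (ZMod 2) m g]
    obtain h | h := ZMod.eq_zero_or_eq_one (m : ZMod 2)
    · simp [h, hy]
    · simp [h, add_assoc, add_self, hy]
  · rintro (hx | hx)
    · exact mem_sup_left hx
    · simpa [add_assoc, add_self] using
        add_mem (mem_sup_left hx) (mem_sup_right (mem_zmultiples g) : g ∈ H ⊔ zmultiples g)

lemma coe_sup_zmultiples :
    ((H ⊔ zmultiples g : AddSubgroup V) : Set V) = (H : Set V) ∪ (· + g) '' H := by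
  ext x
  simp only [SetLike.mem_coe, mem_sup_zmultiples_iff, Set.mem_union, Set.mem_image]
  refine or_congr_right ⟨fun hx => ⟨x + g, hx, by simp [add_assoc, add_self]⟩, ?_⟩
  rintro ⟨y, hy, rfl⟩
  simpa [add_assoc, add_self] using hy

lemma card_sup_zmultiples (hg : g ∉ H) :
    Nat.card (H ⊔ zmultiples g : AddSubgroup V) = 2 * Nat.card H := by
  have hdisj : Disjoint (H : Set V) ((· + g) '' H) := by
    refine Set.disjoint_left.2 fun x hx ⟨y, hy, hxy⟩ => hg ?_
    simpa [← hxy] using sub_mem hx hy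
  change Nat.card ((H ⊔ zmultiples g : AddSubgroup V) : Set V) = 2 * Nat.card (H : Set V)
  rw [Nat.card_coe_set_eq, Nat.card_coe_set_eq, coe_sup_zmultiples, Set.ncard_def, Set.ncard_def,
    Set.encard_union_eq hdisj, (add_left_injective g).encard_image, ← two_mul, ENat.toNat_mul]
  rfl

lemma exists_sup_zmultiples_eq {k : ℕ} (hH : Nat.card H = 2 ^ (k + 1)) :
    ∃ (H₀ : AddSubgroup V) (g : V), g ∉ H₀ ∧ Nat.card H₀ = 2 ^ k ∧ H₀ ⊔ zmultiples g = H := by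
  obtain ⟨g, hgH, hg0⟩ := H.bot_or_exists_ne_zero.resolve_left <| by
    rintro rfl
    simp [eq_comm (a := 1)] at hH
  obtain ⟨f, hf⟩ := Module.Projective.exists_dual_eq_one (ZMod 2) hg0
  let H₀ := H ⊓ (LinearMap.ker f).toAddSubgroup
  have hg : g ∉ H₀ := fun h => by simp [H₀, hf] at h
  have hsup : H₀ ⊔ zmultiples g = H := by
    ext x
    simp only [mem_sup_zmultiples_iff, H₀, mem_inf, Submodule.mem_toAddSubgroup, LinearMap.mem_ker]
    constructor
    · rintro (hx | hx)
      · exact hx.1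
      · simpa [add_assoc, add_self] using add_mem hx.1 hgH
    · intro hx
      rcases ZMod.eq_zero_or_eq_one (f x) with h | h
      · exact .inl ⟨hx, h⟩
      · exact .inr ⟨add_mem hx hgH, by simp [h, hf, add_self]⟩
  refine ⟨H₀, g, hg, ?_, hsup⟩
  have := card_sup_zmultiples hg
  rw [hsup, hH, pow_succ] at this
  omega

end ZModModule

def fundClassesOfRank (n k : ℕ) : Set (AddMonoidAlgebra (ZMod 2) (Fin n → ZMod 2)) :=
  {x | ∃ H : AddSubgroup (Fin n → ZMod 2), Nat.card H = 2 ^ k ∧ x = fundClass n H}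

section GroupAlgebra

variable {n : ℕ}

local notation "G" => Fin n → ZMod 2
local notation "R" => AddMonoidAlgebra (ZMod 2) (Fin n → ZMod 2)

open AddSubgroup ZModModule

open Classical in
lemma coeff_fundClass (H : AddSubgroup G) (x : G) :
    (fundClass n H).coeff x = if x ∈ H then 1 else 0 := by
  rw [fundClass, finsum_eq_sum_of_fintype, ← Finset.sum_subtype {y | y ∈ H} (by simp)
    (fun h => single h (1 : ZMod 2)), coeff_sum, Finsupp.finsetSum_apply]
  simp [Finsupp.single_apply]

lemma coeff_mul_one_add_single (y : R) (g x : G) :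
    (y * (1 + single g 1)).coeff x = y.coeff x + y.coeff (x + g) := by
  simp [mul_add, AddMonoidAlgebra.coeff_mul_single_apply, ZModModule.neg_eq_self]

lemma fundClass_mul_one_add_single_of_mem {H : AddSubgroup G} {g : G} (hg : g ∈ H) :
    fundClass n H * (1 + single g 1) = 0 := by
  ext x
  classical
  simp [coeff_mul_one_add_single, coeff_fundClass, add_mem_cancel_right hg, add_self]

lemma fundClass_mul_one_add_single_of_notMem {H : AddSubgroup G} {g : G} (hg : g ∉ H) :
    fundClass n H * (1 + single g 1) = fundClass n (H ⊔ zmultiples g) := by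
  ext x
  classical
  simp only [coeff_mul_one_add_single, coeff_fundClass, mem_sup_zmultiples_iff]
  have : ¬ (x ∈ H ∧ x + g ∈ H) := fun ⟨hx, hxg⟩ => hg (by simpa using sub_mem hxg hx)
  split_ifs <;> simp_all

lemma fundClass_bot : fundClass n ⊥ = 1 := by
  ext x
  classical
  simp [coeff_fundClass, one_def, Finsupp.single_apply, eq_comm]

lemma aug_single (g : G) (c : ZMod 2) : aug n (single g c) = c := by
  simp [aug, lift_single]

lemma sub_aug_smul_one_mem_span (x : R) :
    x - aug n x • 1 ∈ Submodule.span (ZMod 2) (Set.range fun g : G => 1 + single g 1) := by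
  induction x using AddMonoidAlgebra.induction_linear with
  | zero => simp
  | add x y hx hy => simpa [add_smul, add_sub_add_comm] using add_mem hx hy
  | single g c =>
    convert Submodule.smul_mem _ c (Submodule.subset_span (Set.mem_range_self g)) using 1
    simp [aug_single, sub_eq_add, smul_add, add_comm]

lemma restrictScalars_augIdeal : (augIdeal n).restrictScalars (ZMod 2) =
    Submodule.span (ZMod 2) (Set.range fun g : G => 1 + single g 1) := by
  refine le_antisymm (fun x hx => ?_) (Submodule.span_le.2 ?_)
  · have hx : aug n x = 0 := hx
    simpa [hx] using sub_aug_smul_one_mem_span x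
  · rintro _ ⟨g, rfl⟩
    simp [augIdeal, aug_single, add_self]

lemma fundClassesOfRank_zero : fundClassesOfRank n 0 = {1} := by
  ext x
  simp [fundClassesOfRank, fundClass_bot]

lemma span_fundClassesOfRank_mul_augIdeal (k : ℕ) :
    Submodule.span (ZMod 2) (fundClassesOfRank n k) * (augIdeal n).restrictScalars (ZMod 2) =
      Submodule.span (ZMod 2) (fundClassesOfRank n (k + 1)) := by
  rw [restrictScalars_augIdeal, Submodule.span_mul_span]
  refine le_antisymm (Submodule.span_le.2 ?_) (Submodule.span_mono ?_)
  · rintro _ ⟨_, ⟨H, hH, rfl⟩, _, ⟨g, rfl⟩, rfl⟩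
    change fundClass n H * (1 + single g 1) ∈ _
    by_cases hg : g ∈ H
    · rw [fundClass_mul_one_add_single_of_mem hg]
      exact zero_mem _
    · rw [fundClass_mul_one_add_single_of_notMem hg]
      exact Submodule.subset_span ⟨_, by rw [card_sup_zmultiples hg, hH, pow_succ'], rfl⟩
  · rintro _ ⟨H, hH, rfl⟩
    obtain ⟨H₀, g, hg, hH₀, rfl⟩ := exists_sup_zmultiples_eq hH
    exact ⟨_, ⟨H₀, hH₀, rfl⟩, _, ⟨g, rfl⟩, fundClass_mul_one_add_single_of_notMem hg⟩

lemma restrictScalars_augIdeal_pow (k : ℕ) :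
    (augIdeal n).restrictScalars (ZMod 2) ^ k = Submodule.span (ZMod 2) (fundClassesOfRank n k) := by
  induction k with
  | zero => rw [pow_zero, Submodule.one_eq_span, fundClassesOfRank_zero]
  | succ k ih => rw [pow_succ, ih, span_fundClassesOfRank_mul_augIdeal]

end GroupAlgebra

/-- For `k ≥ 1`, the `k`-th power of the augmentation ideal, viewed as a `ZMod 2`-submodule,
is the `ZMod 2`-linear span of the fundamental classes of the subgroups with `2 ^ k`
elements (the rank-`k` subgroups). -/
theorem augIdeal_pow_eq_span_fundClass (n k : ℕ) (hk : 1 ≤ k) :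
    Submodule.restrictScalars (ZMod 2) ((augIdeal n) ^ k) =
      Submodule.span (ZMod 2)
        {x : AddMonoidAlgebra (ZMod 2) (Fin n → ZMod 2) |
          ∃ H : AddSubgroup (Fin n → ZMod 2), Nat.card H = 2 ^ k ∧ x = fundClass n H} := by
  obtain ⟨k, rfl⟩ := Nat.exists_eq_add_of_le' hk
  rw [Submodule.restrictScalars_pow k.succ_ne_zero]
  exact restrictScalars_augIdeal_pow (k + 1)
end

section
/- Let n be a natural number, G = (Fin n → ZMod 2), R = AddMonoidAlgebra (ZMod 2) G, and I ⊆ R the augmentation ideal. Then I^k = 0 for every k > n; in particular I^(n+1) = 0. -/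
open AddMonoidAlgebra

/-!
The augmentation ideal is generated by the `n` elements `[eᵢ] - 1`: indeed
`[g + h] - 1 = ([g] - 1) [h] + ([h] - 1)`, and `x - ε(x)` lies in the ideal they generate for
every `x`. In characteristic `2`, `([eᵢ] - 1)² = [2eᵢ] + 1 = 0`, so a product of `n + 1`
generators repeats one of them and vanishes.
-/

theorem Ideal.span_range_pow_eq_bot_of_mul_self_eq_zero {R ι : Type*} [CommSemiring R]
    [Fintype ι] (f : ι → R) (hf : ∀ i, f i * f i = 0) :
    Ideal.span (Set.range f) ^ (Fintype.card ι + 1) = ⊥ := by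
  rw [eq_bot_iff, Ideal.span, Submodule.span_pow, Submodule.span_le]
  intro _ hx
  obtain ⟨x, rfl⟩ := Set.mem_pow.1 hx
  choose j hj using fun m => (x m).2
  obtain ⟨m₁, m₂, hne, heq⟩ := Fintype.exists_ne_map_eq_of_card_lt j (by simp)
  have hprod : (List.ofFn fun m => (x m : R)).prod = ∏ m, f (j m) := by
    simp only [List.prod_ofFn, hj]
  rw [hprod, ← Finset.mul_prod_erase _ _ (Finset.mem_univ m₁),
    ← Finset.mul_prod_erase _ _ (Finset.mem_erase.2 ⟨hne.symm, Finset.mem_univ m₂⟩),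
    ← mul_assoc, heq, hf, zero_mul]
  exact Submodule.zero_mem _

namespace AddMonoidAlgebra

variable {k G ι : Type*} [CommRing k] [AddCommMonoid G]

theorem single_sub_one_mul_self_eq_zero [CharP k 2] {g : G} (hg : g + g = 0) :
    (single g (1 : k) - 1) * (single g 1 - 1) = 0 := by
  have : CharP k[G] 2 := charP_of_injective_algebraMap (single_right_injective (m := 0)) 2
  rw [CharTwo.sub_eq_add, CharTwo.add_mul_self, single_mul_single, hg, one_mul, one_mul,
    ← one_def, CharTwo.add_self_eq_zero]

theorem single_sub_one_mem_span {s : ι → G} {g : G}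
    (hg : g ∈ AddSubmonoid.closure (Set.range s)) :
    single g (1 : k) - 1 ∈ Ideal.span (Set.range fun i => single (s i) 1 - 1) := by
  induction hg using AddSubmonoid.closure_induction with
  | mem _ hx => obtain ⟨i, rfl⟩ := hx; exact Ideal.subset_span ⟨i, rfl⟩
  | zero => simp [← one_def]
  | add x y _ _ hx hy =>
    have hxy : single x (1 : k) * single y 1 = single (x + y) 1 := by
      rw [single_mul_single, one_mul]
    rw [← hxy, show single x (1 : k) * single y 1 - 1 =
      (single x 1 - 1) * single y 1 + (single y 1 - 1) by ring]
    exact add_mem (Ideal.mul_mem_right _ _ hx) hy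

theorem ker_lift_one_le_span {s : ι → G} (hs : AddSubmonoid.closure (Set.range s) = ⊤) :
    RingHom.ker (lift k k G 1) ≤ Ideal.span (Set.range fun i => single (s i) 1 - 1) := by
  have sub_aug_mem (x : k[G]) : x - algebraMap k k[G] (lift k k G 1 x) ∈
      Ideal.span (Set.range fun i => single (s i) 1 - 1) := by
    induction x using induction_linear with
    | zero => simp
    | add x y hx hy => simpa [add_sub_add_comm] using add_mem hx hy
    | single g c =>
      have hsingle : single g c - algebraMap k k[G] (lift k k G 1 (single g c)) =
          c • (single g 1 - 1) := by
        simp [lift_single, smul_sub, one_def]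
      rw [hsingle]
      exact Submodule.smul_of_tower_mem _ c
        (single_sub_one_mem_span (hs ▸ AddSubmonoid.mem_top g))
  intro x hx
  simpa [(RingHom.mem_ker).1 hx] using sub_aug_mem x

end AddMonoidAlgebra

theorem ZMod.addSubmonoidClosure_range_piSingle_one (m : ℕ) [NeZero m] (ι : Type*)
    [Fintype ι] [DecidableEq ι] :
    AddSubmonoid.closure (Set.range fun i : ι => (Pi.single i 1 : ι → ZMod m)) = ⊤ := by
  refine eq_top_iff.2 fun g _ => ?_
  rw [← Finset.univ_sum_single g]
  refine AddSubmonoid.sum_mem _ fun i _ => ?_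
  rw [← ZMod.natCast_zmod_val (g i), ← nsmul_one, Pi.single_smul]
  exact AddSubmonoid.nsmul_mem _ (AddSubmonoid.subset_closure (Set.mem_range_self i)) _

/-- `I ^ k = 0` for every `k > n`; in particular `I ^ (n + 1) = 0`. -/
theorem augIdeal_pow_eq_bot (n : ℕ) :
    (∀ k : ℕ, n < k → (augIdeal n) ^ k = ⊥) ∧ (augIdeal n) ^ (n + 1) = ⊥ := by
  let e : Fin n → Fin n → ZMod 2 := fun i => Pi.single i 1
  have hspan : augIdeal n ≤ Ideal.span (Set.range fun i => single (e i) (1 : ZMod 2) - 1) :=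
    ker_lift_one_le_span (ZMod.addSubmonoidClosure_range_piSingle_one 2 (Fin n))
  have he (i : Fin n) : e i + e i = 0 := by
    rw [← Pi.single_add, show (1 + 1 : ZMod 2) = 0 from rfl, Pi.single_zero]
  have hpow : augIdeal n ^ (n + 1) = ⊥ := by
    refine eq_bot_iff.2 ((Ideal.pow_right_mono hspan _).trans ?_)
    simpa using (Ideal.span_range_pow_eq_bot_of_mul_self_eq_zero _
      fun i => single_sub_one_mul_self_eq_zero (he i)).le
  exact ⟨fun k hk => eq_bot_iff.2 (hpow ▸ Ideal.pow_le_pow_right hk), hpow⟩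
end

section
/- Let n be a natural number, G = (Fin n → ZMod 2), R = AddMonoidAlgebra (ZMod 2) G, and I ⊆ R the augmentation ideal. The map G → I/I² sending g ∈ G to the class of 1 + [g] modulo I² is bijective; hence it is an isomorphism of (ZMod 2)-vector spaces between G and I/I², and in particular dim_{ZMod 2}(I/I²) = n. -/
/-! The linear map `d = augDeriv : ∑ c_g [g] ↦ ∑ c_g • g` satisfies
`d (x y) = ε x • d y + ε y • d x`, so it vanishes on `I²` and descends to `I/I² → G`, which sends
the class of `[g] - 1` back to `g`.
Conversely `([g] - 1) ([h] - 1) = ([g + h] - 1) - ([g] - 1) - ([h] - 1)`, so `g ↦ [g] - 1` is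
additive modulo `I²`, and its image spans `I/I²` because every `x ∈ I` equals
`∑ x_g • ([g] - 1)`. Over `ZMod 2` we have `1 + [g] = [g] - 1`. -/

open AddMonoidAlgebra

/-- The augmentation ideal `I`, viewed as a `ZMod 2`-submodule of the group algebra. -/
noncomputable def ISub (n : ℕ) :
    Submodule (ZMod 2) (AddMonoidAlgebra (ZMod 2) (Fin n → ZMod 2)) :=
  Submodule.restrictScalars (ZMod 2) (augIdeal n)

/-- `I²`, viewed as a `ZMod 2`-submodule of `I`. -/
noncomputable def I2Sub (n : ℕ) : Submodule (ZMod 2) (ISub n) :=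
  Submodule.comap (ISub n).subtype
    (Submodule.restrictScalars (ZMod 2) ((augIdeal n) ^ 2))

/-- The quotient `ZMod 2`-module `I / I²`. -/
noncomputable abbrev IModISq (n : ℕ) := ISub n ⧸ I2Sub n

theorem one_add_single_mem_augIdeal (n : ℕ) (g : Fin n → ZMod 2) :
    (1 : AddMonoidAlgebra (ZMod 2) (Fin n → ZMod 2)) + AddMonoidAlgebra.single g 1 ∈
      augIdeal n := by
  rw [augIdeal, RingHom.mem_ker, map_add, map_one]
  simp [aug]
  decide

/-- The map `G → I/I²` sending `g` to the class of `1 + [g]` modulo `I²`. -/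
noncomputable def classOf (n : ℕ) (g : Fin n → ZMod 2) : IModISq n :=
  Submodule.Quotient.mk
    (⟨1 + AddMonoidAlgebra.single g 1, one_add_single_mem_augIdeal n g⟩ : ISub n)

namespace AddMonoidAlgebra

section Augmentation

variable {k G : Type*} [CommSemiring k] [AddMonoid G]

variable (k G) in
noncomputable def augmentation : AddMonoidAlgebra k G →ₐ[k] k :=
  lift k k G 1

@[simp]
lemma augmentation_single (g : G) (c : k) : augmentation k G (single g c) = c := by
  simp [augmentation]

lemma augmentation_apply (x : AddMonoidAlgebra k G) :
    augmentation k G x = x.coeff.sum fun _ c ↦ c := by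
  simp [augmentation, lift_apply]

end Augmentation

section Ring

variable {k G : Type*} [CommRing k]

lemma single_sub_one_mem_ker_augmentation [AddMonoid G] (g : G) :
    (single g 1 - 1 : AddMonoidAlgebra k G) ∈ RingHom.ker (augmentation k G) := by
  rw [RingHom.mem_ker, map_sub, map_one, augmentation_single, sub_self]

lemma sum_smul_single_sub_one_eq_self [AddMonoid G] {x : AddMonoidAlgebra k G}
    (hx : augmentation k G x = 0) :
    (x.coeff.sum fun g c ↦ c • (single g 1 - 1)) = x := by
  have hsum : (x.coeff.sum fun _ c ↦ c • (1 : AddMonoidAlgebra k G)) =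
      augmentation k G x • 1 := by
    rw [augmentation_apply, Finsupp.sum, Finsupp.sum, Finset.sum_smul]
  simp only [smul_sub, smul_single, smul_eq_mul, mul_one, Finsupp.sum_sub, sum_coeff_single]
  rw [hsum, hx, zero_smul, sub_zero]

lemma single_add_sub_one [AddCommMonoid G] (g h : G) :
    (single (g + h) 1 - 1 : AddMonoidAlgebra k G) =
      (single g 1 - 1) + (single h 1 - 1) + (single g 1 - 1) * (single h 1 - 1) := by
  have hmul : single g 1 * single h 1 = (single (g + h) 1 : AddMonoidAlgebra k G) := by
    rw [single_mul_single, mul_one]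
  rw [← hmul]
  ring

lemma one_add_single_eq_single_sub_one [CharP k 2] [AddMonoid G] (g : G) :
    (1 + single g 1 : AddMonoidAlgebra k G) = single g 1 - 1 := by
  rw [sub_eq_add_neg, add_comm, one_def, ← single_neg, CharTwo.neg_eq]

end Ring

section Derivation

variable {k G : Type*} [CommSemiring k] [AddCommMonoid G] [Module k G]

variable (k G) in
noncomputable def augDeriv : AddMonoidAlgebra k G →ₗ[k] G :=
  (basis G k).constr k id

@[simp]
lemma augDeriv_single (g : G) (c : k) : augDeriv k G (single g c) = c • g := by
  rw [← mul_one c, ← smul_single', map_smul, ← basis_apply, augDeriv,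
    Module.Basis.constr_basis, id, mul_one]

lemma augDeriv_mul (x y : AddMonoidAlgebra k G) :
    augDeriv k G (x * y) =
      augmentation k G x • augDeriv k G y + augmentation k G y • augDeriv k G x := by
  induction x using induction_linear with
  | zero => simp
  | add x x' hx hx' => simp only [add_mul, map_add, hx, hx', add_smul, smul_add]; abel
  | single g a =>
    induction y using induction_linear with
    | zero => simp
    | add y y' hy hy' => simp only [mul_add, map_add, hy, hy', add_smul, smul_add]; abel
    | single h b =>
      simp only [single_mul_single, augDeriv_single, augmentation_single, smul_add, smul_smul]
      rw [mul_comm b a, add_comm]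

lemma augDeriv_eq_zero_of_mem_ker_sq {x : AddMonoidAlgebra k G}
    (hx : x ∈ RingHom.ker (augmentation k G) ^ 2) : augDeriv k G x = 0 := by
  rw [pow_two] at hx
  refine Submodule.mul_induction_on hx (fun a ha b hb ↦ ?_) fun a b ha hb ↦ ?_
  · rw [RingHom.mem_ker] at ha hb
    rw [augDeriv_mul, ha, hb, zero_smul, zero_smul, add_zero]
  · rw [map_add, ha, hb, add_zero]

end Derivation

end AddMonoidAlgebra

lemma classOf_add (n : ℕ) (g h : Fin n → ZMod 2) :
    classOf n (g + h) = classOf n g + classOf n h := by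
  rw [classOf, classOf, classOf, ← Submodule.Quotient.mk_add, Submodule.Quotient.eq]
  change (1 + single (g + h) 1) - ((1 + single g 1) + (1 + single h 1)) ∈ augIdeal n ^ 2
  simp only [one_add_single_eq_single_sub_one]
  rw [single_add_sub_one, add_sub_cancel_left, pow_two]
  exact Ideal.mul_mem_mul (single_sub_one_mem_ker_augmentation g)
    (single_sub_one_mem_ker_augmentation h)

noncomputable def classOfLinearMap (n : ℕ) : (Fin n → ZMod 2) →ₗ[ZMod 2] IModISq n :=
  (AddMonoidHom.mk' (classOf n) (classOf_add n)).toZModLinearMap 2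

noncomputable def augDerivQuot (n : ℕ) : IModISq n →ₗ[ZMod 2] (Fin n → ZMod 2) :=
  (I2Sub n).liftQ (augDeriv _ _ ∘ₗ (ISub n).subtype) fun _ hx ↦
    LinearMap.mem_ker.2 (augDeriv_eq_zero_of_mem_ker_sq hx)

lemma augDerivQuot_classOf (n : ℕ) (g : Fin n → ZMod 2) :
    augDerivQuot n (classOf n g) = g := by
  rw [augDerivQuot, classOf, Submodule.liftQ_apply]
  simp [one_def]

lemma classOf_surjective (n : ℕ) : Function.Surjective (classOf n) := by
  intro z
  obtain ⟨x, rfl⟩ := Submodule.Quotient.mk_surjective _ z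
  let gen (g : Fin n → ZMod 2) : ISub n := ⟨1 + single g 1, one_add_single_mem_augIdeal n g⟩
  have hdecomp : (x.1.coeff.sum fun g c ↦ c • gen g) = x := by
    apply Subtype.ext
    simp only [gen, Finsupp.sum, Submodule.coe_sum, Submodule.coe_smul,
      one_add_single_eq_single_sub_one]
    exact sum_smul_single_sub_one_eq_self x.2
  refine ⟨x.1.coeff.sum fun g c ↦ c • g, ?_⟩
  calc classOf n _ = classOfLinearMap n (x.1.coeff.sum fun g c ↦ c • g) := rfl
    _ = (I2Sub n).mkQ (x.1.coeff.sum fun g c ↦ c • gen g) := by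
      simp only [map_finsuppSum, map_smul]
      rfl
    _ = _ := by rw [hdecomp]; rfl

/-- The map `G → I/I²`, `g ↦ (1 + [g]) mod I²`, is bijective; in particular the
`ZMod 2`-dimension of `I/I²` equals `n`. -/
theorem classOf_bijective_and_finrank (n : ℕ) :
    Function.Bijective (classOf n) ∧ Module.finrank (ZMod 2) (IModISq n) = n := by
  have hbij : Function.Bijective (classOf n) :=
    ⟨Function.LeftInverse.injective (augDerivQuot_classOf n), classOf_surjective n⟩
  refine ⟨hbij, ?_⟩
  rw [← (LinearEquiv.ofBijective (classOfLinearMap n) hbij).finrank_eq, Module.finrank_fin_fun]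
end

section
/- Let n be a natural number and G = (Fin n → ZMod 2). There exists an isomorphism of (ZMod 2)-algebras between the exterior algebra ExteriorAlgebra (ZMod 2) (Fin n → ZMod 2) and the group algebra AddMonoidAlgebra (ZMod 2) G. -/
/-!
In characteristic 2 the exterior algebra is commutative, since `ι x * ι y = -(ι y * ι x)`, and
for a basis `b` of `M` the elements `1 + ι (b i)` square to `1`, just as the basis vectors `eᵢ`
of `(ℤ/2)^I` do in the group algebra. So `ι (b i) ↦ eᵢ + 1` (whose square is `eᵢ² + 1 = 0`)
and `eᵢ ↦ 1 + ι (b i)` extend to algebra maps in both directions, which are mutually inverse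
because they are so on generators.
-/

namespace ExteriorAlgebra

variable {R M : Type*} [CommRing R] [AddCommGroup M] [Module R M]

instance instCharP (p : ℕ) [CharP R p] : CharP (ExteriorAlgebra R M) p :=
  charP_of_injective_algebraMap (algebraMap_leftInverse M).injective p

variable [CharP R 2]

theorem commute_ι_ι_of_charTwo (x y : M) : Commute (ι R x) (ι R y) := by
  rw [Commute, SemiconjBy, ← CharTwo.neg_eq (ι R y * ι R x)]
  exact eq_neg_of_add_eq_zero_left (ι_add_mul_swap x y)

theorem mul_comm_of_charTwo (a b : ExteriorAlgebra R M) : a * b = b * a := by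
  have mem_adjoin (c : ExteriorAlgebra R M) : c ∈ Algebra.adjoin R (Set.range (ι R)) := by
    rw [CliffordAlgebra.adjoin_range_ι]; trivial
  have commute_ι (x : M) : Commute (ι R x) b :=
    Algebra.commute_of_mem_adjoin_of_forall_mem_commute (mem_adjoin b) <| by
      rintro _ ⟨y, rfl⟩; exact commute_ι_ι_of_charTwo x y
  exact (Algebra.commute_of_mem_adjoin_of_forall_mem_commute (mem_adjoin a) <| by
    rintro _ ⟨x, rfl⟩; exact (commute_ι x).symm).symm.eq

abbrev commRingOfCharTwo : CommRing (ExteriorAlgebra R M) where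
  mul_comm := mul_comm_of_charTwo

end ExteriorAlgebra

theorem Module.Basis.constr_mul_self_eq_zero {I R M A : Type*} [CommRing R] [AddCommGroup M]
    [Module R M] [CommRing A] [CharP A 2] [Algebra R A] (b : Module.Basis I R M) {y : I → A}
    (hy : ∀ i, y i * y i = 0) (m : M) : b.constr R y m * b.constr R y m = 0 := by
  rw [b.constr_apply, Finsupp.sum, CharTwo.sum_mul_self]
  exact Finset.sum_eq_zero fun i _ => by rw [smul_mul_smul_comm, hy, smul_zero]

namespace AddMonoidAlgebra

variable {R : Type*} [CommRing R]

instance instCharP {G : Type*} [AddMonoid G] (p : ℕ) [CharP R p] :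
    CharP (AddMonoidAlgebra R G) p :=
  charP_of_injective_algebraMap' R p

theorem single_add_one_mul_self {G : Type*} [AddCommMonoid G] [CharP R 2] {g : G} (hg : g + g = 0) :
    (single g (1 : R) + 1) * (single g 1 + 1) = 0 := by
  rw [CharTwo.add_mul_self, single_mul_single, hg, one_mul, mul_one, ← one_def,
    CharTwo.add_self_eq_zero]

theorem prod_single_pow_val {I : Type*} [Fintype I] [DecidableEq I] {n : ℕ} [NeZero n]
    (a : I → ZMod n) : ∏ i, single (Pi.single i 1) (1 : R) ^ (a i).val = single a 1 := by
  simp only [single_pow, one_pow, prod_single, Finset.prod_const_one]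
  congr
  conv_rhs => rw [← Finset.univ_sum_single a]
  refine Finset.sum_congr rfl fun i _ => ?_
  rw [← Pi.single_smul', nsmul_one, ZMod.natCast_zmod_val]

end AddMonoidAlgebra

namespace AddChar

variable {I C : Type*} [Fintype I] [CommMonoid C] {n : ℕ} [NeZero n] {ζ : I → C}

def piZModChar (hζ : ∀ i, ζ i ^ n = 1) : AddChar (I → ZMod n) C :=
  ∏ i, (zmodChar n (hζ i)).compAddMonoidHom (Pi.evalAddMonoidHom (fun _ => ZMod n) i)

theorem piZModChar_apply (hζ : ∀ i, ζ i ^ n = 1) (a : I → ZMod n) :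
    piZModChar hζ a = ∏ i, ζ i ^ (a i).val := by
  simp [piZModChar, prod_apply, zmodChar_apply]

theorem piZModChar_single [DecidableEq I] (hζ : ∀ i, ζ i ^ n = 1) (i : I) (c : ZMod n) :
    piZModChar hζ (Pi.single i c) = ζ i ^ c.val := by
  rw [piZModChar_apply, Finset.prod_eq_single i (fun j _ hj => by simp [hj]) (by simp),
    Pi.single_eq_same]

end AddChar

namespace ExteriorAlgebra

open AddMonoidAlgebra

attribute [local instance] commRingOfCharTwo

variable {R M I : Type*} [CommRing R] [CharP R 2] [AddCommGroup M] [Module R M]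

theorem one_add_ι_mul_self (m : M) : (1 + ι R m) * (1 + ι R m) = 1 := by
  rw [CharTwo.add_mul_self, ι_sq_zero, one_mul, add_zero]

variable (b : Module.Basis I R M)

noncomputable def toAddMonoidAlgebra [DecidableEq I] :
    ExteriorAlgebra R M →ₐ[R] AddMonoidAlgebra R (I → ZMod 2) :=
  lift R ⟨b.constr R fun i => single (Pi.single i 1) 1 + 1, b.constr_mul_self_eq_zero fun _ =>
    single_add_one_mul_self (funext fun _ => CharTwo.add_self_eq_zero _)⟩

noncomputable def ofAddMonoidAlgebra [Fintype I] :
    AddMonoidAlgebra R (I → ZMod 2) →ₐ[R] ExteriorAlgebra R M :=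
  AddMonoidAlgebra.lift R _ _
    (AddChar.piZModChar (ζ := fun i => 1 + ι R (b i)) fun i => by
      rw [sq, one_add_ι_mul_self]).toMonoidHom

theorem toAddMonoidAlgebra_ι_basis [DecidableEq I] (i : I) :
    toAddMonoidAlgebra b (ι R (b i)) = single (Pi.single i 1) 1 + 1 := by
  rw [toAddMonoidAlgebra, lift_ι_apply, b.constr_basis]

theorem toAddMonoidAlgebra_one_add_ι_basis [DecidableEq I] (i : I) :
    toAddMonoidAlgebra b (1 + ι R (b i)) = single (Pi.single i 1) 1 := by
  rw [map_add, map_one, toAddMonoidAlgebra_ι_basis, add_left_comm, CharTwo.add_self_eq_zero,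
    add_zero]

theorem ofAddMonoidAlgebra_single [Fintype I] (a : I → ZMod 2) :
    ofAddMonoidAlgebra b (single a 1) = ∏ i, (1 + ι R (b i)) ^ (a i).val := by
  rw [ofAddMonoidAlgebra, lift_single, one_smul, AddChar.toMonoidHom_apply, toAdd_ofAdd,
    AddChar.piZModChar_apply]

theorem ofAddMonoidAlgebra_single_basis [Fintype I] [DecidableEq I] (i : I) :
    ofAddMonoidAlgebra b (single (Pi.single i 1) 1) = 1 + ι R (b i) := by
  rw [ofAddMonoidAlgebra, lift_single, one_smul, AddChar.toMonoidHom_apply, toAdd_ofAdd,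
    AddChar.piZModChar_single, ZMod.val_one, pow_one]

theorem toAddMonoidAlgebra_comp_ofAddMonoidAlgebra [Fintype I] [DecidableEq I] :
    (toAddMonoidAlgebra b).comp (ofAddMonoidAlgebra b) = AlgHom.id R _ := by
  refine AddMonoidAlgebra.algHom_ext (fun a => ?_) (Subsingleton.elim _ _)
  rw [AlgHom.comp_apply, ofAddMonoidAlgebra_single, map_prod]
  simp only [map_pow, toAddMonoidAlgebra_one_add_ι_basis, prod_single_pow_val, AlgHom.id_apply]

theorem ofAddMonoidAlgebra_comp_toAddMonoidAlgebra [Fintype I] [DecidableEq I] :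
    (ofAddMonoidAlgebra b).comp (toAddMonoidAlgebra b) = AlgHom.id R _ := by
  refine hom_ext (b.ext fun i => ?_)
  simp only [LinearMap.comp_apply, AlgHom.toLinearMap_apply, AlgHom.comp_apply,
    toAddMonoidAlgebra_ι_basis, map_add, map_one, ofAddMonoidAlgebra_single_basis, AlgHom.id_apply]
  rw [add_right_comm, CharTwo.add_self_eq_zero, zero_add]

noncomputable def equivAddMonoidAlgebra [Fintype I] [DecidableEq I] :
    ExteriorAlgebra R M ≃ₐ[R] AddMonoidAlgebra R (I → ZMod 2) :=
  AlgEquiv.ofAlgHom (toAddMonoidAlgebra b) (ofAddMonoidAlgebra b)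
    (toAddMonoidAlgebra_comp_ofAddMonoidAlgebra b) (ofAddMonoidAlgebra_comp_toAddMonoidAlgebra b)

end ExteriorAlgebra

/-- The exterior algebra of the `n`-dimensional `ZMod 2`-vector space and the group algebra of
the elementary abelian 2-group of rank `n` over `ZMod 2` are isomorphic as `ZMod 2`-algebras.
(For an `n`-dimensional compact torus `T`, this is the isomorphism of ungraded algebras
`H_*(T; ℤ/2) ≅ H_0(T[2]; ℤ/2)`.) -/
theorem exteriorAlgebra_iso_groupAlgebra (n : ℕ) :
    Nonempty
      (ExteriorAlgebra (ZMod 2) (Fin n → ZMod 2) ≃ₐ[ZMod 2]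
        AddMonoidAlgebra (ZMod 2) (Fin n → ZMod 2)) :=
  ⟨ExteriorAlgebra.equivAddMonoidAlgebra (Pi.basisFun (ZMod 2) (Fin n))⟩
end
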